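/- Let G be an infinite finitely generated group with finite symmetric generating set S and let X_n be a symmetric, finitely supported random walk on G whose step distribution has support generating G. Then there exists a constant C > 0 (depending on G, S and the step distribution) such that for all n ≥ 1: H(X_n) ≤ C·(E|X_n| + 1) and E|X_n| ≤ C·√(n·(H(X_n) + 1)) (the speed-entropy relation). -/

import Mathlib

open scoped BigOperators Classical

/-- Convolution of two measures (given as weight functions) on a group. -/
noncomputable def conv {G : Type*} [Group G] (μ ν : G → ℝ) : G → ℝ :=
  fun g => ∑' h, μ h * ν (h⁻¹ * g)

/-- The `n`-fold convolution power of `μ`; `convPow μ n` is the distribution of `X_n`. -/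
noncomputable def convPow {G : Type*} [Group G] (μ : G → ℝ) : ℕ → G → ℝ
  | 0 => fun g => if g = 1 then 1 else 0
  | n + 1 => conv (convPow μ n) μ

/-- Shannon entropy of a measure on a countable group:
`H(μ) = -∑ μ(g) log μ(g)` (with `0 log 0 = 0`). -/
noncomputable def entropy {G : Type*} (μ : G → ℝ) : ℝ :=
  ∑' g, Real.negMulLog (μ g)

/-- Word length with respect to a generating set `S`. -/
noncomputable def wordLength {G : Type*} [Group G] (S : Set G) (g : G) : ℕ :=
  sInf {n | ∃ l : List G, l.length = n ∧ (∀ x ∈ l, x ∈ S) ∧ l.prod = g}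

/-- Rate of escape: `E|X_n| = ∑ μ^{*n}(g) |g|`. -/
noncomputable def speed {G : Type*} [Group G] (S : Set G) (μ : G → ℝ) (n : ℕ) : ℝ :=
  ∑' g, convPow μ n g * (wordLength S g : ℝ)

/-- `μ` is a symmetric, finitely supported probability measure whose support generates `G`. -/
structure IsStepDist {G : Type*} [Group G] (μ : G → ℝ) : Prop where
  nonneg : ∀ g, 0 ≤ μ g
  total : ∑' g, μ g = 1
  symm : ∀ g, μ g⁻¹ = μ g
  finSupp : (Function.support μ).Finite
  gen : Subgroup.closure (Function.support μ) = ⊤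

/-- `S` is a finite symmetric generating set of `G`. -/
structure IsGenSet {G : Type*} [Group G] (S : Set G) : Prop where
  finite : S.Finite
  symm : ∀ s ∈ S, s⁻¹ ∈ S
  gen : Subgroup.closure S = ⊤

/-!
Entropy is bounded by speed through Gibbs' inequality against the weights `(2 (|S| + 1))^{-|g|}`,
whose total mass is at most `2` because balls grow at most like `(|S| + 1)^m`.

Speed is bounded by entropy through the Carne–Varopoulos estimate
`μ^{*n}(g) ≤ 2 exp (-(|g| / K)² / (2 n))`, where `K` bounds the word length of the steps:
Gibbs' inequality against it gives `E|X_n|² ≤ 2 n K² (H(X_n) + log 2)`, and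
`(E|X_n|)² ≤ E|X_n|²`. The estimate is proved for the symmetric matrix of transition
probabilities between the points reachable in `n` steps. Writing `x^n` as the binomial average
of the Chebyshev polynomials `T_{n-2j}`, the terms with `|n - 2j| K < |g|` vanish since `T_k`
has degree `k` and the walk needs more than `k` steps to reach `g`; the other terms are at most
`1` since the spectrum lies in `[-1, 1]`, and their total weight is a binomial tail.
-/

open Finset Real
open scoped Pointwise

section WordLength

variable {G : Type*} [Group G] {S : Set G}

lemma IsGenSet.exists_list_prod_eq (hS : IsGenSet S) (g : G) :
    ∃ l : List G, (∀ x ∈ l, x ∈ S) ∧ l.prod = g := by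
  have hsymm : S⁻¹ ⊆ S := fun s hs => by simpa using hS.symm _ hs
  have hg : g ∈ (Subgroup.closure S).toSubmonoid := by rw [hS.gen]; trivial
  rw [Subgroup.closure_toSubmonoid, Set.union_eq_left.2 hsymm] at hg
  exact Submonoid.exists_list_of_mem_closure hg

lemma IsGenSet.exists_list_length_eq_wordLength (hS : IsGenSet S) (g : G) :
    ∃ l : List G, l.length = wordLength S g ∧ (∀ x ∈ l, x ∈ S) ∧ l.prod = g := by
  obtain ⟨l, hl, hprod⟩ := hS.exists_list_prod_eq g
  exact Nat.sInf_mem (s := {n | ∃ l : List G, l.length = n ∧ (∀ x ∈ l, x ∈ S) ∧ l.prod = g})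
    ⟨l.length, l, rfl, hl, hprod⟩

lemma wordLength_le_length {l : List G} (hl : ∀ x ∈ l, x ∈ S) :
    wordLength S l.prod ≤ l.length :=
  Nat.sInf_le ⟨l, rfl, hl, rfl⟩

@[simp]
lemma wordLength_one : wordLength S (1 : G) = 0 :=
  Nat.le_zero.1 (wordLength_le_length (l := []) (by simp))

lemma IsGenSet.wordLength_mul_le (hS : IsGenSet S) (g h : G) :
    wordLength S (g * h) ≤ wordLength S g + wordLength S h := by
  obtain ⟨l₁, hlen₁, hl₁, rfl⟩ := hS.exists_list_length_eq_wordLength g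
  obtain ⟨l₂, hlen₂, hl₂, rfl⟩ := hS.exists_list_length_eq_wordLength h
  have hl : ∀ x ∈ l₁ ++ l₂, x ∈ S := fun x hx => (List.mem_append.1 hx).elim (hl₁ x) (hl₂ x)
  simpa [← hlen₁, ← hlen₂] using wordLength_le_length hl

lemma IsGenSet.wordLength_le_of_mem_pow (hS : IsGenSet S) {T : Finset G} {K : ℕ}
    (hT : ∀ t ∈ T, wordLength S t ≤ K) {n : ℕ} {g : G} (hg : g ∈ T ^ n) :
    wordLength S g ≤ n * K := by
  induction n generalizing g with
  | zero => simp_all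
  | succ n ih =>
    rw [pow_succ] at hg
    obtain ⟨h, hh, t, ht, rfl⟩ := Finset.mem_mul.1 hg
    calc wordLength S (h * t) ≤ wordLength S h + wordLength S t := hS.wordLength_mul_le h t
      _ ≤ n * K + K := add_le_add (ih hh) (hT t ht)
      _ = (n + 1) * K := by ring

lemma IsGenSet.mem_pow_of_wordLength_le (hS : IsGenSet S) {g : G} {m : ℕ}
    (hg : wordLength S g ≤ m) : g ∈ insert 1 hS.finite.toFinset ^ m := by
  obtain ⟨l, hlen, hl, rfl⟩ := hS.exists_list_length_eq_wordLength g
  refine Finset.pow_subset_pow_right (Finset.mem_insert_self _ _) (hlen ▸ hg) ?_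
  clear hlen hg
  induction l with
  | nil => simp
  | cons x l ih =>
    rw [List.prod_cons, List.length_cons, pow_succ']
    exact Finset.mul_mem_mul (by simp [hl x (by simp)]) (ih fun y hy => hl y (by simp [hy]))

lemma IsGenSet.card_filter_wordLength_le (hS : IsGenSet S) (F : Finset G) (m : ℕ) :
    #{g ∈ F | wordLength S g ≤ m} ≤ (S.ncard + 1) ^ m := by
  calc #{g ∈ F | wordLength S g ≤ m} ≤ #(insert 1 hS.finite.toFinset ^ m) :=
        Finset.card_le_card fun g hg => hS.mem_pow_of_wordLength_le (Finset.mem_filter.1 hg).2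
    _ ≤ #(insert 1 hS.finite.toFinset) ^ m := Finset.card_pow_le
    _ ≤ (S.ncard + 1) ^ m := by
        gcongr
        rw [Set.ncard_eq_toFinset_card S hS.finite]
        exact Finset.card_insert_le _ _

lemma IsGenSet.sum_pow_wordLength_le_two (hS : IsGenSet S) (F : Finset G) {x : ℝ}
    (hx₀ : 0 ≤ x) (hx : 2 * (S.ncard + 1) * x ≤ 1) :
    ∑ g ∈ F, x ^ wordLength S g ≤ 2 := by
  set M := F.sup (wordLength S)
  have hmaps : ∀ g ∈ F, wordLength S g ∈ range (M + 1) :=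
    fun g hg => mem_range_succ_iff.2 (Finset.le_sup hg)
  calc ∑ g ∈ F, x ^ wordLength S g
      = ∑ m ∈ range (M + 1), #{g ∈ F | wordLength S g = m} * x ^ m := by
        rw [← Finset.sum_fiberwise_of_maps_to hmaps]
        refine sum_congr rfl fun m _ => ?_
        rw [sum_congr rfl fun g hg => by rw [(mem_filter.1 hg).2], sum_const, nsmul_eq_mul]
    _ ≤ ∑ m ∈ range (M + 1), ((S.ncard + 1 : ℕ) : ℝ) ^ m * x ^ m := by
        gcongr with m
        have hsub : {g ∈ F | wordLength S g = m} ⊆ {g ∈ F | wordLength S g ≤ m} :=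
          fun g hg => by simp only [mem_filter] at hg ⊢; exact ⟨hg.1, hg.2.le⟩
        exact_mod_cast (card_le_card hsub).trans (hS.card_filter_wordLength_le F m)
    _ ≤ ∑ m ∈ range (M + 1), (1 / 2 : ℝ) ^ m := by
        gcongr with m
        rw [← mul_pow]
        gcongr
        push_cast
        linarith
    _ ≤ 2 := sum_geometric_two_le _

end WordLength

section ConvPow

variable {G : Type*} [Group G] {μ : G → ℝ}

lemma support_convPow_subset {D : Finset G} (hD : Function.support μ ⊆ D) (n : ℕ) :
    Function.support (convPow μ n) ⊆ ↑(insert 1 D ^ n) := by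
  induction n with
  | zero => intro g hg; simpa [convPow] using hg
  | succ n ih =>
    intro g hg
    obtain ⟨h, hh⟩ : ∃ h, convPow μ n h * μ (h⁻¹ * g) ≠ 0 := by
      by_contra! hzero
      exact hg (by simp [convPow, conv, hzero])
    rw [pow_succ, Finset.coe_mul]
    refine ⟨h, ih (left_ne_zero_of_mul hh), h⁻¹ * g, ?_, mul_inv_cancel_left h g⟩
    exact Finset.subset_insert _ _ (hD (right_ne_zero_of_mul hh))

lemma convPow_succ_eq_sum {n : ℕ} {F : Finset G} (hF : Function.support (convPow μ n) ⊆ F)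
    (g : G) : convPow μ (n + 1) g = ∑ h ∈ F, convPow μ n h * μ (h⁻¹ * g) :=
  tsum_eq_sum' ((Function.support_mul_subset_left _ _).trans hF)

namespace IsStepDist

lemma support_convPow_subset_pow (hμ : IsStepDist μ) (n : ℕ) :
    Function.support (convPow μ n) ⊆ ↑(insert 1 hμ.finSupp.toFinset ^ n) :=
  support_convPow_subset hμ.finSupp.coe_toFinset.symm.subset n

lemma convPow_nonneg (hμ : IsStepDist μ) (n : ℕ) (g : G) : 0 ≤ convPow μ n g := by
  induction n generalizing g with
  | zero => simp only [convPow]; split_ifs <;> norm_num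
  | succ n ih => exact tsum_nonneg fun h => mul_nonneg (ih h) (hμ.nonneg _)

lemma summable_comp_mul_left (hμ : IsStepDist μ) (g : G) : Summable fun h => μ (g * h) :=
  (Equiv.mulLeft g).summable_iff.2 (summable_of_hasFiniteSupport hμ.finSupp)

lemma tsum_comp_mul_left (hμ : IsStepDist μ) (g : G) : ∑' h, μ (g * h) = 1 :=
  ((Equiv.mulLeft g).tsum_eq μ).trans hμ.total

lemma tsum_convPow (hμ : IsStepDist μ) (n : ℕ) : ∑' g, convPow μ n g = 1 := by
  induction n with
  | zero => simp [convPow]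
  | succ n ih =>
    have hF := hμ.support_convPow_subset_pow n
    calc ∑' g, convPow μ (n + 1) g
        = ∑' g, ∑ h ∈ insert 1 hμ.finSupp.toFinset ^ n, convPow μ n h * μ (h⁻¹ * g) :=
          tsum_congr (convPow_succ_eq_sum hF)
      _ = ∑ h ∈ insert 1 hμ.finSupp.toFinset ^ n, convPow μ n h * ∑' g, μ (h⁻¹ * g) := by
          rw [Summable.tsum_finsetSum fun h _ => (hμ.summable_comp_mul_left h⁻¹).mul_left _]
          simp_rw [tsum_mul_left]
      _ = 1 := by
          simp_rw [hμ.tsum_comp_mul_left, mul_one]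
          rwa [tsum_eq_sum' hF] at ih

lemma sum_convPow_eq_one (hμ : IsStepDist μ) {n : ℕ} {F : Finset G}
    (hF : Function.support (convPow μ n) ⊆ F) : ∑ g ∈ F, convPow μ n g = 1 := by
  rw [← hμ.tsum_convPow n, tsum_eq_sum' hF]

end IsStepDist

end ConvPow

section Binomial

open Polynomial Polynomial.Chebyshev

lemma Real.two_mul_cos_pow (θ : ℝ) (n : ℕ) :
    (2 * cos θ) ^ n = ∑ j ∈ range (n + 1), (n.choose j : ℝ) * cos ((n - 2 * j) * θ) := by
  have hexp : ((2 * cos θ : ℝ) : ℂ) ^ n =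
      ∑ j ∈ range (n + 1),
        ((n.choose j : ℝ) : ℂ) * Complex.exp (((n - 2 * j) * θ : ℝ) * Complex.I) := by
    have h2cos : ((2 * cos θ : ℝ) : ℂ) =
        Complex.exp (-(θ * Complex.I)) + Complex.exp (θ * Complex.I) := by
      push_cast; rw [Complex.cos, neg_mul]; ring
    rw [h2cos, add_pow]
    refine sum_congr rfl fun j hj => ?_
    rw [← Complex.exp_nat_mul, ← Complex.exp_nat_mul, ← Complex.exp_add,
      Nat.cast_sub (mem_range_succ_iff.1 hj)]
    push_cast
    ring_nf
  have := congrArg Complex.re hexp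
  rw [← Complex.ofReal_pow, Complex.ofReal_re, Complex.re_sum] at this
  simpa only [Complex.re_ofReal_mul, Complex.exp_ofReal_mul_I_re] using this

lemma Polynomial.Chebyshev.X_pow_eq_sum_T (n : ℕ) :
    (X : ℝ[X]) ^ n = ∑ j ∈ range (n + 1), ((n.choose j : ℝ) / 2 ^ n) • T ℝ (n - 2 * j) := by
  refine eq_of_infinite_eval_eq _ _ ((Set.Icc_infinite (by norm_num : (-1 : ℝ) < 1)).mono ?_)
  rintro x ⟨hx₁, hx₂⟩
  rw [Set.mem_ofPred_eq, ← cos_arccos hx₁ hx₂, eval_pow, eval_X, eval_finsetSum]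
  simp only [eval_smul, T_real_cos, smul_eq_mul]
  rw [← mul_div_cancel_left₀ (cos (arccos x) ^ n) (pow_ne_zero n two_ne_zero), ← mul_pow,
    Real.two_mul_cos_pow, sum_div]
  refine sum_congr rfl fun j _ => ?_
  push_cast
  ring

lemma Polynomial.Chebyshev.abs_eval_T_le_one (k : ℤ) {x : ℝ} (hx : |x| ≤ 1) :
    |(T ℝ k).eval x| ≤ 1 := by
  obtain ⟨hx₁, hx₂⟩ := abs_le.1 hx
  rw [← cos_arccos hx₁ hx₂, T_real_cos]
  exact abs_cos_le_one _

lemma sum_choose_mul_exp (t : ℝ) (n : ℕ) :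
    ∑ j ∈ range (n + 1), (n.choose j : ℝ) * exp (t * (n - 2 * j)) = (2 * cosh t) ^ n := by
  rw [cosh_eq, mul_div_cancel₀ _ two_ne_zero, add_comm (exp t), add_pow]
  refine sum_congr rfl fun j hj => ?_
  rw [← exp_nat_mul, ← exp_nat_mul, ← exp_add, Nat.cast_sub (mem_range_succ_iff.1 hj)]
  ring_nf

lemma one_le_exp_neg_mul_mul_add {t r m : ℝ} (ht : 0 ≤ t) (hrm : r ≤ |m|) :
    1 ≤ exp (-(t * r)) * (exp (t * m) + exp (-t * m)) := by
  rw [mul_add, ← exp_add, ← exp_add]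
  rcases abs_cases m with ⟨habs, _⟩ | ⟨habs, _⟩
  · have : 1 ≤ exp (-(t * r) + t * m) := one_le_exp (by nlinarith)
    linarith [exp_pos (-(t * r) + -t * m)]
  · have : 1 ≤ exp (-(t * r) + -t * m) := one_le_exp (by nlinarith)
    linarith [exp_pos (-(t * r) + t * m)]

lemma binomial_tail_le (n : ℕ) (hn : 0 < n) {r : ℝ} (hr : 0 ≤ r) :
    ∑ j ∈ range (n + 1) with r ≤ |(n : ℝ) - 2 * (j : ℕ)|, (n.choose j : ℝ) / 2 ^ n
      ≤ 2 * exp (-r ^ 2 / (2 * n)) := by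
  have hn' : (0 : ℝ) < n := Nat.cast_pos.2 hn
  set t := r / n
  have ht : 0 ≤ t := div_nonneg hr hn'.le
  have hchernoff : ∀ j ∈ range (n + 1), (if r ≤ |(n : ℝ) - 2 * j| then (n.choose j : ℝ) / 2 ^ n
      else 0) ≤ (n.choose j : ℝ) / 2 ^ n * exp (-(t * r)) *
        (exp (t * (n - 2 * j)) + exp (-t * (n - 2 * j))) := by
    intro j _
    split_ifs with hj
    · rw [mul_assoc]
      exact le_mul_of_one_le_right (by positivity) (one_le_exp_neg_mul_mul_add ht hj)
    · positivity
  calc ∑ j ∈ range (n + 1) with r ≤ |(n : ℝ) - 2 * (j : ℕ)|, (n.choose j : ℝ) / 2 ^ n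
      ≤ ∑ j ∈ range (n + 1), (n.choose j : ℝ) / 2 ^ n * exp (-(t * r)) *
          (exp (t * (n - 2 * j)) + exp (-t * (n - 2 * j))) := by
        rw [sum_filter]; exact sum_le_sum hchernoff
    _ = exp (-(t * r)) / 2 ^ n * (∑ j ∈ range (n + 1), (n.choose j : ℝ) * exp (t * (n - 2 * j))
          + ∑ j ∈ range (n + 1), (n.choose j : ℝ) * exp (-t * (n - 2 * j))) := by
        rw [← sum_add_distrib, mul_sum]
        exact sum_congr rfl fun j _ => by ring
    _ = 2 * exp (-(t * r)) * cosh t ^ n := by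
        rw [sum_choose_mul_exp, sum_choose_mul_exp, cosh_neg, mul_pow]
        field_simp
        ring
    _ ≤ 2 * exp (-(t * r)) * exp (t ^ 2 / 2) ^ n := by
        gcongr; exact cosh_le_exp_half_sq t
    _ = 2 * exp (-r ^ 2 / (2 * n)) := by
        rw [← exp_nat_mul, mul_assoc, ← exp_add]
        congr 2
        simp only [t]
        field_simp
        ring

end Binomial

namespace Matrix.IsHermitian

open Polynomial Polynomial.Chebyshev

variable {ι : Type*} [Fintype ι] [DecidableEq ι] {A : Matrix ι ι ℝ}

lemma abs_eigenvalues_le (hA : A.IsHermitian) {c : ℝ} (hrow : ∀ i, ∑ j, |A i j| ≤ c) (i : ι) :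
    |hA.eigenvalues i| ≤ c := by
  have hev : Module.End.HasEigenvalue (toLin' A) (hA.eigenvalues i) := by
    rw [Module.End.hasEigenvalue_iff_mem_spectrum, spectrum_toLin']
    exact hA.eigenvalues_mem_spectrum_real i
  obtain ⟨k, hk⟩ := eigenvalue_mem_ball hev
  rw [Metric.mem_closedBall, Real.dist_eq] at hk
  calc |hA.eigenvalues i| ≤ |A k k| + |hA.eigenvalues i - A k k| := by
        linarith [abs_sub_abs_le_abs_sub (hA.eigenvalues i) (A k k)]
    _ ≤ |A k k| + ∑ j ∈ univ.erase k, ‖A k j‖ := by gcongr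
    _ = ∑ j, |A k j| := add_sum_erase _ (fun j => |A k j|) (mem_univ k)
    _ ≤ c := hrow k

lemma aeval_apply (hA : A.IsHermitian) (P : ℝ[X]) (a b : ι) :
    aeval A P a b = ∑ i, hA.eigenvectorUnitary a i * P.eval (hA.eigenvalues i) *
      hA.eigenvectorUnitary b i := by
  rw [← cfc_polynomial P A, hA.cfc_eq, IsHermitian.cfc, Unitary.conjStarAlgAut_apply]
  simp [Matrix.mul_apply, Matrix.diagonal_apply]

lemma abs_aeval_apply_le (hA : A.IsHermitian) (P : ℝ[X])
    (hP : ∀ i, |P.eval (hA.eigenvalues i)| ≤ 1) (a b : ι) : |aeval A P a b| ≤ 1 := by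
  set U : Matrix ι ι ℝ := (hA.eigenvectorUnitary : Matrix ι ι ℝ)
  have hrow : ∀ a, ∑ i, U a i ^ 2 = 1 := fun a => by
    simpa [U, Matrix.mul_apply, Matrix.star_apply, sq, Matrix.one_apply] using
      congrFun₂ (Matrix.mem_unitaryGroup_iff.1 hA.eigenvectorUnitary.2) a a
  rw [hA.aeval_apply]
  calc |∑ i, U a i * P.eval (hA.eigenvalues i) * U b i|
      ≤ ∑ i, |U a i * P.eval (hA.eigenvalues i) * U b i| := abs_sum_le_sum_abs _ _
    _ ≤ ∑ i, |U a i| * |U b i| := by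
        gcongr with i
        rw [abs_mul, abs_mul, mul_right_comm]
        exact mul_le_of_le_one_right (by positivity) (hP i)
    _ ≤ ∑ i, (U a i ^ 2 + U b i ^ 2) / 2 := by
        gcongr with i
        rw [← sq_abs (U a i), ← sq_abs (U b i)]
        linarith [two_mul_le_add_sq |U a i| |U b i|]
    _ = 1 := by rw [← sum_div, sum_add_distrib, hrow, hrow]; norm_num

theorem abs_pow_apply_le (hA : A.IsHermitian) (hev : ∀ i, |hA.eigenvalues i| ≤ 1) {a b : ι}
    {r : ℝ} (hr : 0 ≤ r) (hvanish : ∀ m : ℕ, (m : ℝ) < r → (A ^ m) a b = 0) {n : ℕ}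
    (hn : 0 < n) : |(A ^ n) a b| ≤ 2 * Real.exp (-r ^ 2 / (2 * n)) := by
  set c : ℤ → ℝ := fun k => aeval A (T ℝ k) a b
  have hc_le : ∀ k, |c k| ≤ 1 := fun k =>
    hA.abs_aeval_apply_le _ (fun i => abs_eval_T_le_one k (hev i)) a b
  have hc_zero : ∀ k : ℤ, (|k| : ℝ) < r → c k = 0 := by
    intro k hk
    obtain ⟨m, rfl | rfl⟩ := Int.eq_nat_or_neg k <;>
    · simp only [c, T_neg, aeval_eq_sum_range, natDegree_T, Int.natAbs_neg, Int.natAbs_natCast,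
        Matrix.sum_apply, Matrix.smul_apply, smul_eq_mul]
      refine sum_eq_zero fun i hi => ?_
      rw [hvanish i (lt_of_le_of_lt ?_ hk), mul_zero]
      push_cast [abs_neg]
      exact_mod_cast mem_range_succ_iff.1 hi
  have hexpand : (A ^ n) a b = ∑ j ∈ range (n + 1), (n.choose j : ℝ) / 2 ^ n * c (n - 2 * j) := by
    simpa [c, Matrix.sum_apply] using congrArg (fun P => aeval A P a b) (X_pow_eq_sum_T n)
  calc |(A ^ n) a b| ≤ ∑ j ∈ range (n + 1), |(n.choose j : ℝ) / 2 ^ n * c (n - 2 * j)| := by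
        rw [hexpand]; exact abs_sum_le_sum_abs _ _
    _ ≤ ∑ j ∈ range (n + 1) with r ≤ |(n : ℝ) - 2 * (j : ℕ)|, (n.choose j : ℝ) / 2 ^ n := by
        rw [sum_filter]
        gcongr with j
        rw [abs_mul, abs_of_nonneg (by positivity)]
        split_ifs with hj
        · exact mul_le_of_le_one_right (by positivity) (hc_le _)
        · rw [hc_zero _ (by push_cast; linarith), abs_zero, mul_zero]
    _ ≤ 2 * Real.exp (-r ^ 2 / (2 * n)) := binomial_tail_le n hn hr

end Matrix.IsHermitian

lemma Real.negMulLog_le_mul_neg_log_add_sub {p q : ℝ} (hp : 0 ≤ p) (hq : 0 < q) :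
    negMulLog p ≤ p * -log q + (q - p) := by
  have hsplit := negMulLog_mul (p / q) q
  rw [div_mul_cancel₀ _ hq.ne'] at hsplit
  have hle := negMulLog_le_one_sub_self (div_nonneg hp hq.le)
  calc negMulLog p = q * negMulLog (p / q) + p / q * negMulLog q := hsplit
    _ ≤ q * (1 - p / q) + p / q * negMulLog q := by gcongr
    _ = p * -log q + (q - p) := by
        rw [negMulLog]
        field_simp
        ring

lemma Real.mul_neg_log_le_negMulLog {p q : ℝ} (hp : 0 ≤ p) (hpq : p ≤ q) :
    p * -log q ≤ negMulLog p := by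
  rcases hp.eq_or_lt with rfl | hp
  · simp
  rw [negMulLog, neg_mul, mul_neg, neg_le_neg_iff]
  exact mul_le_mul_of_nonneg_left (log_le_log hp hpq) hp.le

lemma entropy_eq_sum {α : Type*} {p : α → ℝ} {F : Finset α} (hF : Function.support p ⊆ F) :
    entropy p = ∑ a ∈ F, negMulLog (p a) :=
  tsum_eq_sum' ((Function.support_comp_subset negMulLog_zero p).trans hF)

section RandomWalk

variable {G : Type*} [Group G] {S : Set G} {μ : G → ℝ}

lemma speed_eq_sum {n : ℕ} {F : Finset G} (hF : Function.support (convPow μ n) ⊆ F) :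
    speed S μ n = ∑ g ∈ F, convPow μ n g * wordLength S g :=
  tsum_eq_sum' ((Function.support_mul_subset_left _ _).trans hF)

def transitionMatrix (μ : G → ℝ) (B : Finset G) : Matrix B B ℝ :=
  Matrix.of fun g h => μ ((g : G)⁻¹ * h)

lemma transitionMatrix_pow_apply {B : Finset G} (hone : (1 : G) ∈ B) {n : ℕ}
    (hB : ∀ m < n, Function.support (convPow μ m) ⊆ B) (y : B) :
    (transitionMatrix μ B ^ n) ⟨1, hone⟩ y = convPow μ n y := by
  induction n generalizing y with
  | zero => simp [convPow, Matrix.one_apply, Subtype.ext_iff, eq_comm]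
  | succ n ih =>
    rw [pow_succ, Matrix.mul_apply, convPow_succ_eq_sum (hB n n.lt_succ_self),
      ← Finset.sum_coe_sort B]
    exact sum_congr rfl fun h _ => by rw [ih (fun m hm => hB m (by omega)) h]; rfl

namespace IsStepDist

lemma isHermitian_transitionMatrix (hμ : IsStepDist μ) (B : Finset G) :
    (transitionMatrix μ B).IsHermitian :=
  Matrix.IsHermitian.ext fun g h => by simp [transitionMatrix, ← hμ.symm ((h : G)⁻¹ * g)]

lemma sum_abs_transitionMatrix_le (hμ : IsStepDist μ) (B : Finset G) (g : B) :
    ∑ h, |transitionMatrix μ B g h| ≤ 1 := by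
  simp only [transitionMatrix, Matrix.of_apply, abs_of_nonneg (hμ.nonneg _)]
  rw [Finset.sum_coe_sort B fun h => μ ((g : G)⁻¹ * h), ← hμ.tsum_comp_mul_left (g : G)⁻¹]
  exact (hμ.summable_comp_mul_left _).sum_le_tsum _ fun h _ => hμ.nonneg _

lemma speed_nonneg (hμ : IsStepDist μ) (n : ℕ) : 0 ≤ speed S μ n :=
  tsum_nonneg fun g => mul_nonneg (hμ.convPow_nonneg n g) (Nat.cast_nonneg _)

theorem convPow_le_two_mul_exp (hS : IsGenSet S) (hμ : IsStepDist μ) {K : ℕ} (hK₀ : 0 < K)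
    (hK : ∀ s, μ s ≠ 0 → wordLength S s ≤ K) {n : ℕ} (hn : 0 < n) (x : G) :
    convPow μ n x ≤ 2 * exp (-(wordLength S x / K : ℝ) ^ 2 / (2 * n)) := by
  set B := insert 1 hμ.finSupp.toFinset ^ n
  have hone : (1 : G) ∈ B := Finset.one_mem_pow (mem_insert_self _ _)
  have hsupp : ∀ m ≤ n, Function.support (convPow μ m) ⊆ B := fun m hm =>
    (hμ.support_convPow_subset_pow m).trans
      (Finset.coe_subset.2 (Finset.pow_subset_pow_right (mem_insert_self _ _) hm))
  have hlen : ∀ m, ∀ g ∈ insert 1 hμ.finSupp.toFinset ^ m, wordLength S g ≤ m * K :=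
    fun m g => hS.wordLength_le_of_mem_pow fun t ht => by
      rcases mem_insert.1 ht with rfl | ht
      · simp
      · exact hK t (by simpa using ht)
  by_cases hx : x ∈ B
  swap
  · rw [Function.notMem_support.1 fun h => hx (hsupp n le_rfl h)]
    positivity
  have hpow : ∀ m ≤ n, ∀ y : B, (transitionMatrix μ B ^ m) ⟨1, hone⟩ y = convPow μ m y :=
    fun m hm => transitionMatrix_pow_apply hone fun k hk => hsupp k (by omega)
  have hvanish : ∀ m : ℕ, (m : ℝ) < wordLength S x / K →
      (transitionMatrix μ B ^ m) ⟨1, hone⟩ ⟨x, hx⟩ = 0 := by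
    intro m hm
    rw [lt_div_iff₀ (by exact_mod_cast hK₀)] at hm
    have hmx : m * K < wordLength S x := by exact_mod_cast hm
    have hmn : m ≤ n := by
      by_contra! h
      exact hmx.not_ge ((hlen n x hx).trans (Nat.mul_le_mul_right K h.le))
    rw [hpow m hmn]
    exact Function.notMem_support.1 fun h =>
      absurd (hlen m x (hμ.support_convPow_subset_pow m h)) (by omega)
  have hA := hμ.isHermitian_transitionMatrix B
  rw [← hpow n le_rfl ⟨x, hx⟩]
  exact (le_abs_self _).trans (hA.abs_pow_apply_le
    (hA.abs_eigenvalues_le (hμ.sum_abs_transitionMatrix_le B)) (by positivity) hvanish hn)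

theorem entropy_convPow_le (hS : IsGenSet S) (hμ : IsStepDist μ) (n : ℕ) :
    entropy (convPow μ n) ≤ log (2 * (S.ncard + 1)) * speed S μ n + 1 := by
  set F := insert 1 hμ.finSupp.toFinset ^ n
  have hF := hμ.support_convPow_subset_pow n
  set a : ℝ := 2 * (S.ncard + 1)
  have ha : 0 < a := by positivity
  set p := convPow μ n
  have hq : ∑ g ∈ F, a⁻¹ ^ wordLength S g ≤ 2 :=
    hS.sum_pow_wordLength_le_two F (by positivity) (mul_inv_cancel₀ ha.ne').le
  calc entropy p = ∑ g ∈ F, negMulLog (p g) := entropy_eq_sum hF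
    _ ≤ ∑ g ∈ F, (p g * -log (a⁻¹ ^ wordLength S g) + (a⁻¹ ^ wordLength S g - p g)) :=
        sum_le_sum fun g _ =>
          negMulLog_le_mul_neg_log_add_sub (hμ.convPow_nonneg n g) (by positivity)
    _ = log a * ∑ g ∈ F, p g * wordLength S g + (∑ g ∈ F, a⁻¹ ^ wordLength S g
          - ∑ g ∈ F, p g) := by
        rw [mul_sum, ← sum_sub_distrib, ← sum_add_distrib]
        refine sum_congr rfl fun g _ => ?_
        rw [log_pow, log_inv]
        ring
    _ ≤ log a * speed S μ n + 1 := by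
        rw [speed_eq_sum hF, hμ.sum_convPow_eq_one hF]
        linarith

theorem speed_sq_le (hS : IsGenSet S) (hμ : IsStepDist μ) {K : ℕ} (hK₀ : 0 < K)
    (hK : ∀ s, μ s ≠ 0 → wordLength S s ≤ K) {n : ℕ} (hn : 0 < n) :
    speed S μ n ^ 2 ≤ 2 * K ^ 2 * n * (entropy (convPow μ n) + log 2) := by
  set F := insert 1 hμ.finSupp.toFinset ^ n
  have hF : Function.support (convPow μ n) ⊆ F := hμ.support_convPow_subset_pow n
  have hc : (0 : ℝ) < 2 * K ^ 2 * n := by positivity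
  have hp := hμ.convPow_nonneg n
  have hgibbs : (∑ g ∈ F, convPow μ n g * (wordLength S g : ℝ) ^ 2) / (2 * K ^ 2 * n) - log 2
      ≤ entropy (convPow μ n) := by
    calc (∑ g ∈ F, convPow μ n g * (wordLength S g : ℝ) ^ 2) / (2 * K ^ 2 * n) - log 2
        = ∑ g ∈ F, (convPow μ n g * (wordLength S g : ℝ) ^ 2 / (2 * K ^ 2 * n)
            - convPow μ n g * log 2) := by
          rw [sum_sub_distrib, ← sum_mul, hμ.sum_convPow_eq_one hF, one_mul, sum_div]
      _ = ∑ g ∈ F, convPow μ n g * -log (2 * exp (-(wordLength S g / K : ℝ) ^ 2 / (2 * n))) := by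
          refine sum_congr rfl fun g _ => ?_
          rw [log_mul two_ne_zero (exp_pos _).ne', log_exp]
          field_simp
          ring
      _ ≤ ∑ g ∈ F, negMulLog (convPow μ n g) := sum_le_sum fun g _ =>
          mul_neg_log_le_negMulLog (hp g) (hμ.convPow_le_two_mul_exp hS hK₀ hK hn g)
      _ = entropy (convPow μ n) := (entropy_eq_sum hF).symm
  have hjensen : speed S μ n ^ 2 ≤ ∑ g ∈ F, convPow μ n g * (wordLength S g : ℝ) ^ 2 := by
    have := sum_sq_le_sum_mul_sum_of_sq_le_mul F (fun g _ => hp g)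
      (fun g _ => mul_nonneg (hp g) (sq_nonneg (wordLength S g : ℝ))) fun g _ =>
        (by ring : (convPow μ n g * wordLength S g) ^ 2
          = convPow μ n g * (convPow μ n g * wordLength S g ^ 2)).le
    rwa [hμ.sum_convPow_eq_one hF, one_mul, ← speed_eq_sum hF] at this
  rw [sub_le_iff_le_add, div_le_iff₀ hc] at hgibbs
  linarith

theorem speed_le (hS : IsGenSet S) (hμ : IsStepDist μ) {K : ℕ} (hK₀ : 0 < K)
    (hK : ∀ s, μ s ≠ 0 → wordLength S s ≤ K) {n : ℕ} (hn : 0 < n) :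
    speed S μ n ≤ √2 * K * √(n * (entropy (convPow μ n) + 1)) := by
  have hsq := hμ.speed_sq_le hS hK₀ hK hn
  have hlog : log 2 ≤ 1 := by linarith [log_le_sub_one_of_pos (zero_lt_two' ℝ)]
  have hnH : 0 ≤ n * (entropy (convPow μ n) + 1) := by
    have := (mul_nonneg_iff_of_pos_left (by positivity)).1 ((sq_nonneg _).trans hsq)
    exact mul_nonneg n.cast_nonneg (by linarith)
  calc speed S μ n ≤ √(2 * K ^ 2 * (n * (entropy (convPow μ n) + 1))) := by
        refine le_sqrt_of_sq_le (hsq.trans ?_)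
        rw [← mul_assoc]
        gcongr
    _ = √2 * K * √(n * (entropy (convPow μ n) + 1)) := by
        rw [sqrt_mul (by positivity), sqrt_mul zero_le_two, sqrt_sq (Nat.cast_nonneg K)]

end IsStepDist

end RandomWalk

theorem speed_entropy_relation_general
    (G : Type*) [Group G] (S : Set G) (μ : G → ℝ)
    (hS : IsGenSet S) (hμ : IsStepDist μ) :
    ∃ C : ℝ, 0 < C ∧
      ∀ n : ℕ, 1 ≤ n →
        entropy (convPow μ n) ≤ C * (speed S μ n + 1) ∧
        speed S μ n ≤ C * Real.sqrt (n * (entropy (convPow μ n) + 1)) := by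
  obtain ⟨K, hK⟩ := (hμ.finSupp.image (wordLength S)).bddAbove
  have hK' : ∀ s, μ s ≠ 0 → wordLength S s ≤ K + 1 := fun s hs =>
    (hK ⟨s, hs, rfl⟩).trans K.le_succ
  have hlog : 0 ≤ log (2 * (S.ncard + 1)) := log_nonneg (by norm_cast; omega)
  refine ⟨log (2 * (S.ncard + 1)) + 1 + √2 * (K + 1 : ℕ), by positivity, fun n hn => ⟨?_, ?_⟩⟩
  · have hE := hμ.speed_nonneg (S := S) n
    calc entropy (convPow μ n) ≤ log (2 * (S.ncard + 1)) * speed S μ n + 1 :=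
          hμ.entropy_convPow_le hS n
      _ ≤ _ := by
          have hc : (0 : ℝ) ≤ √2 * (K + 1 : ℕ) := by positivity
          nlinarith [mul_nonneg hc hE]
  · calc speed S μ n ≤ √2 * (K + 1 : ℕ) * √(n * (entropy (convPow μ n) + 1)) :=
          hμ.speed_le hS K.succ_pos hK' hn
      _ ≤ _ := by gcongr; linarith

/-- **The speed–entropy relation.** For a symmetric finitely supported random walk on an
infinite finitely generated group there is `C > 0` with
`H(X_n) ≤ C (E|X_n| + 1)` and `E|X_n| ≤ C √(n (H(X_n) + 1))` for all `n ≥ 1`. -/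
theorem speed_entropy_relation
    (G : Type*) [Group G] [Infinite G] (S : Set G) (μ : G → ℝ)
    (hS : IsGenSet S) (hμ : IsStepDist μ) :
    ∃ C : ℝ, 0 < C ∧
      ∀ n : ℕ, 1 ≤ n →
        entropy (convPow μ n) ≤ C * (speed S μ n + 1) ∧
        speed S μ n ≤ C * Real.sqrt (n * (entropy (convPow μ n) + 1)) :=
  speed_entropy_relation_general G S μ hS hμ
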